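/- arXiv:2103.11227 — 2 statements merged into one kernel-verified Lean document; each statement's English description precedes it below -/
import Mathlib

section
/- Let f be a nonzero complex polynomial and φ its zeon extension to CZ_n. Then w ∈ CZ_n satisfies φ(w) = 0 if and only if f(⟨w⟩_0) = 0 and (Dw)^{μ} = 0, where μ = μ_f(⟨w⟩_0) is the multiplicity of ⟨w⟩_0 as a zero of f and Dw = w − ⟨w⟩_0. In particular, if f has no complex zeros then φ has no zeros. -/
noncomputable section

/-- The ideal of squares of generators defining the zeon algebra. -/
def zeonIdeal (n : ℕ) : Ideal (MvPolynomial (Fin n) ℂ) :=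
  Ideal.span (Set.range fun i : Fin n => (MvPolynomial.X i : MvPolynomial (Fin n) ℂ) ^ 2)

/-- The `n`-particle complex zeon algebra `CZ_n`. -/
abbrev Zeon (n : ℕ) := MvPolynomial (Fin n) ℂ ⧸ zeonIdeal n

/-- The scalar part `⟨u⟩₀` of a zeon, as a `ℂ`-algebra homomorphism. -/
def scalarPart (n : ℕ) : Zeon n →ₐ[ℂ] ℂ :=
  Ideal.Quotient.liftₐ (zeonIdeal n) (MvPolynomial.aeval fun _ => (0 : ℂ)) (by
    intro a ha
    have h : zeonIdeal n ≤ RingHom.ker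
        (MvPolynomial.aeval (R := ℂ) fun _ : Fin n => (0 : ℂ)).toRingHom := by
      rw [zeonIdeal, Ideal.span_le]
      rintro _ ⟨i, rfl⟩
      simp [RingHom.mem_ker]
    exact h ha)

/-- The dual (nilpotent) part `Du = u - ⟨u⟩₀`. -/
def dualPart (n : ℕ) (u : Zeon n) : Zeon n := u - algebraMap ℂ (Zeon n) (scalarPart n u)

/-- The generator `ζ_i`. -/
def zeta (n : ℕ) (i : Fin n) : Zeon n := Ideal.Quotient.mk _ (MvPolynomial.X i)

/-- The basis blade `ζ_I`. -/
def blade (n : ℕ) (I : Finset (Fin n)) : Zeon n :=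
  Ideal.Quotient.mk _ (∏ i ∈ I, MvPolynomial.X i)

/-! Let `r = ⟨w⟩₀` and `μ = μ_f(r)`, and write `f = (X - r)^μ g` with `g(r) ≠ 0`. Every zeon with
vanishing scalar part is nilpotent, as the generators square to zero; hence a zeon with nonzero
scalar part is a unit, so `φ(g)(w)` is invertible and `φ(f)(w) = (Dw)^μ φ(g)(w)` vanishes iff
`(Dw)^μ` does. -/

section AugmentedNil

variable {k A : Type*} [Field k] [CommRing A] [Algebra k A] (ε : A →ₐ[k] k)

theorem isUnit_of_augmentation_ne_zero (hε : ∀ x, ε x = 0 → IsNilpotent x) {x : A}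
    (hx : ε x ≠ 0) : IsUnit x := by
  have hnil : IsNilpotent (x - algebraMap k A (ε x)) := hε _ (by simp)
  have hscalar : IsUnit (algebraMap k A (ε x)) := (isUnit_iff_ne_zero.2 hx).map _
  simpa using hnil.isUnit_add_right_of_commute hscalar (.all _ _)

open Polynomial in
theorem aeval_eq_zero_iff_of_augmentation (hε : ∀ x, ε x = 0 → IsNilpotent x) {f : k[X]}
    (hf : f ≠ 0) (w : A) :
    aeval w f = 0 ↔
      f.eval (ε w) = 0 ∧ (w - algebraMap k A (ε w)) ^ f.rootMultiplicity (ε w) = 0 := by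
  have ε_aeval (g : k[X]) : ε (aeval w g) = g.eval (ε w) := by
    rw [← aeval_algHom_apply, coe_aeval_eq_eval]
  set r := ε w
  set g := f /ₘ (X - C r) ^ f.rootMultiplicity r
  have hfactor : aeval w f = (w - algebraMap k A r) ^ f.rootMultiplicity r * aeval w g := by
    conv_lhs => rw [← pow_mul_divByMonic_rootMultiplicity_eq f r]
    simp [g]
  have hunit : IsUnit (aeval w g) := isUnit_of_augmentation_ne_zero ε hε <| by
    rw [ε_aeval]
    exact eval_divByMonic_pow_rootMultiplicity_ne_zero r hf
  constructor
  · intro h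
    refine ⟨by rw [← ε_aeval, h, map_zero], ?_⟩
    rwa [hfactor, hunit.mul_left_eq_zero] at h
  · rintro ⟨-, h⟩
    rw [hfactor, h, zero_mul]

end AugmentedNil

theorem zeta_sq (n : ℕ) (i : Fin n) : zeta n i ^ 2 = 0 := by
  rw [zeta, ← map_pow, Ideal.Quotient.eq_zero_iff_mem]
  exact Ideal.subset_span ⟨i, rfl⟩

open MvPolynomial in
theorem isNilpotent_of_scalarPart_eq_zero {n : ℕ} (u : Zeon n) (hu : scalarPart n u = 0) :
    IsNilpotent u := by
  obtain ⟨p, rfl⟩ := Ideal.Quotient.mk_surjective u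
  have hp : p ∈ idealOfVars (Fin n) ℂ := by
    rw [← pow_one (idealOfVars _ _), mem_pow_idealOfVars_iff']
    intro m hm
    rw [Nat.lt_one_iff, Finsupp.degree_eq_zero_iff] at hm
    subst hm
    change aeval (fun _ => (0 : ℂ)) p = 0 at hu
    simpa [constantCoeff_eq] using hu
  have hnil : (idealOfVars (Fin n) ℂ).map (Ideal.Quotient.mk (zeonIdeal n)) ≤ nilradical _ := by
    rw [Ideal.map_span, Ideal.span_le]
    rintro _ ⟨_, ⟨i, rfl⟩, rfl⟩
    exact ⟨2, zeta_sq n i⟩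
  exact hnil (Ideal.mem_map_of_mem _ hp)

/-- characterization of the zeros of the zeon extension of a nonzero
complex polynomial, via the multiplicity of the scalar part. -/
theorem stmt11 (n : ℕ) (f : Polynomial ℂ) (hf : f ≠ 0) :
    (∀ w : Zeon n, Polynomial.aeval w f = 0 ↔
      f.eval (scalarPart n w) = 0 ∧
        dualPart n w ^ (f.rootMultiplicity (scalarPart n w)) = 0) ∧
    ((∀ z : ℂ, f.eval z ≠ 0) → ∀ w : Zeon n, Polynomial.aeval w f ≠ 0) := by
  have zeros (w : Zeon n) := aeval_eq_zero_iff_of_augmentation (scalarPart n)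
    (isNilpotent_of_scalarPart_eq_zero (n := n)) hf w
  exact ⟨zeros, fun hroot w h => hroot _ ((zeros w).1 h).1⟩
end
end

section
/- Let f be a nonzero complex polynomial and φ its zeon extension to CZ_n. If r is a simple zero of f (μ_f(r) = 1), then the only zero w of φ with ⟨w⟩_0 = r is w = r itself. -/
/-!
Write `f = (X - r) g` with `g(r) ≠ 0`. If `⟨w⟩₀ = r`, then `w - r` is nilpotent, so `g(w)` differs
from the nonzero scalar `g(r)` by a nilpotent and is a unit; hence `f(w) = (w - r) g(w)` vanishes
exactly when `w = r`.
-/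

noncomputable section

open Polynomial

theorem Polynomial.aeval_eq_zero_iff_of_rootMultiplicity_eq_one {K A : Type*} [Field K]
    [CommRing A] [Algebra K A] {f : K[X]} {r : K} (hr : f.rootMultiplicity r = 1) {w : A}
    (hw : IsNilpotent (w - algebraMap K A r)) :
    aeval w f = 0 ↔ w = algebraMap K A r := by
  have hf : f ≠ 0 := by
    rintro rfl
    simp at hr
  obtain ⟨g, hfg, hg⟩ := exists_eq_pow_rootMultiplicity_mul_and_not_dvd f hf r
  rw [hr, pow_one] at hfg
  have hgr : IsUnit (aeval (algebraMap K A r) g) := by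
    rw [aeval_algebraMap_apply_eq_algebraMap_eval]
    exact (isUnit_iff_ne_zero.mpr fun h => hg (dvd_iff_isRoot.mpr h)).map _
  have hgw : IsUnit (aeval w g) := isUnit_aeval_of_isUnit_aeval_of_isNilpotent_sub hgr hw
  rw [hfg, map_mul, hgw.mul_left_eq_zero, map_sub, aeval_X, aeval_C, sub_eq_zero]

variable (n : ℕ)

theorem isNilpotent_zeta (i : Fin n) : IsNilpotent (zeta n i) :=
  ⟨2, by rw [zeta, ← map_pow, Ideal.Quotient.eq_zero_iff_mem]; exact Ideal.subset_span ⟨i, rfl⟩⟩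

theorem map_idealOfVars_le_nilradical :
    (MvPolynomial.idealOfVars (Fin n) ℂ).map (Ideal.Quotient.mk (zeonIdeal n)) ≤
      nilradical (Zeon n) := by
  rw [Ideal.map_span, Ideal.span_le]
  rintro _ ⟨_, ⟨i, rfl⟩, rfl⟩
  exact isNilpotent_zeta n i

theorem isNilpotent_dualPart (u : Zeon n) : IsNilpotent (dualPart n u) := by
  obtain ⟨p, rfl⟩ := Ideal.Quotient.mk_surjective u
  set c := MvPolynomial.constantCoeff p
  have hscalar : scalarPart n (Ideal.Quotient.mk _ p) = c := MvPolynomial.aeval_zero' p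
  have hdual : dualPart n (Ideal.Quotient.mk _ p) = Ideal.Quotient.mk _ (p - MvPolynomial.C c) := by
    rw [dualPart, hscalar, map_sub]
    rfl
  have hvars : p - MvPolynomial.C c ∈ MvPolynomial.idealOfVars (Fin n) ℂ := by
    rw [← pow_one (MvPolynomial.idealOfVars _ _), MvPolynomial.mem_pow_idealOfVars_iff']
    intro m hm
    rw [Nat.lt_one_iff, Finsupp.degree_eq_zero_iff] at hm
    simp [hm, c, MvPolynomial.constantCoeff]
  rw [hdual]
  exact map_idealOfVars_le_nilradical n (Ideal.mem_map_of_mem _ hvars)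

theorem stmt12_general (n : ℕ) (f : Polynomial ℂ) (r : ℂ)
    (hr : f.rootMultiplicity r = 1) :
    Polynomial.aeval (algebraMap ℂ (Zeon n) r) f = 0 ∧
    ∀ w : Zeon n, scalarPart n w = r → Polynomial.aeval w f = 0 →
      w = algebraMap ℂ (Zeon n) r := by
  refine ⟨(aeval_eq_zero_iff_of_rootMultiplicity_eq_one hr (by simp)).mpr rfl, ?_⟩
  intro w hw
  have hnil : IsNilpotent (w - algebraMap ℂ (Zeon n) r) := hw ▸ isNilpotent_dualPart n w
  exact (aeval_eq_zero_iff_of_rootMultiplicity_eq_one hr hnil).mp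

/-- a simple zero `r` of `f` lifts only to the trivial zeon zero `r`. -/
theorem stmt12 (n : ℕ) (f : Polynomial ℂ) (hf : f ≠ 0) (r : ℂ)
    (hr : f.rootMultiplicity r = 1) :
    Polynomial.aeval (algebraMap ℂ (Zeon n) r) f = 0 ∧
    ∀ w : Zeon n, scalarPart n w = r → Polynomial.aeval w f = 0 →
      w = algebraMap ℂ (Zeon n) r :=
  stmt12_general n f r hr
end
end
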